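/- Let M ⊆ ℤ be a nonempty integer interval and let (λ_k)_{k∈M}, (μ_k)_{k∈M} be interlaced real sequences with no finite accumulation point such that Σ_{k∈M}(μ_k − λ_k) < ∞. Assume additionally that λ_k ≠ 0, μ_k ≠ 0, and λ_k·μ_k > 0 for every k ∈ M. Then the infinite product C := ∏_{k∈M} μ_k/λ_k converges (is multipliable), for every nonreal ζ the products ∏_{k∈M} (1 − ζ/μ_k)·(1 − ζ/λ_k)^{-1} and ∏_{k∈M} (μ_k − ζ)/(λ_k − ζ) converge, and C · ∏_{k∈M} (1 − ζ/μ_k)·(1 − ζ/λ_k)^{-1} = ∏_{k∈M} (μ_k − ζ)/(λ_k − ζ). -/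

import Mathlib

open Filter Topology

/-!
The products `∏ μ/λ`, `∏ λ/μ` and `∏ (μ - ζ)/(λ - ζ)` all have the form `∏ b k / a k` with
`∑ ‖b k - a k‖ < ∞` and `‖a k‖` eventually bounded below, so they converge absolutely: for the
first two because the `λ k` escape to infinity while the gaps tend to zero, for the third because
`|λ k - ζ| ≥ |Im ζ|`. Since `(1 - ζ/μ)(1 - ζ/λ)⁻¹ = (λ/μ) · (μ - ζ)/(λ - ζ)`, the normalized
product converges as well, and the identity holds factor by factor.
-/

theorem eventually_cofinite_not_of_finite_sep {α : Type*} {M : Set α} {p : α → Prop}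
    (h : {k ∈ M | p k}.Finite) : ∀ᶠ k : M in cofinite, ¬ p k := by
  rw [eventually_cofinite]
  refine (h.preimage Subtype.val_injective.injOn).subset fun k hk => ?_
  exact ⟨k.2, not_not.1 hk⟩

theorem eventually_one_le_abs_of_summable_abs_sub {ι : Type*} {x y : ι → ℝ}
    (hx : ∀ᶠ k in cofinite, 2 ≤ |x k|) (hxy : Summable fun k => |y k - x k|) :
    ∀ᶠ k in cofinite, 1 ≤ |y k| := by
  filter_upwards [hx, hxy.tendsto_cofinite_zero.eventually (eventually_le_nhds one_pos)]
    with k hxk hgap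
  linarith [abs_sub_abs_le_abs_sub (x k) (y k), abs_sub_comm (x k) (y k)]

theorem multipliable_div_of_summable_norm_sub {ι 𝕜 : Type*} [NormedField 𝕜] [CompleteSpace 𝕜]
    {a b : ι → 𝕜} {c : ℝ} (hc : 0 < c) (ha₀ : ∀ k, a k ≠ 0)
    (ha : ∀ᶠ k in cofinite, c ≤ ‖a k‖) (hab : Summable fun k => ‖b k - a k‖) :
    Multipliable fun k => b k / a k := by
  have hsum : Summable fun k => ‖(b k - a k) / a k‖ := by
    refine (hab.div_const c).of_norm_bounded_eventually ?_
    filter_upwards [ha] with k hk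
    rw [norm_norm, norm_div]
    exact div_le_div_of_nonneg_left (norm_nonneg _) hc hk
  convert multipliable_one_add_of_summable hsum using 2 with k
  field_simp [ha₀ k]
  ring

theorem multipliable_ofReal_sub_div_ofReal_sub {ι : Type*} {x y : ι → ℝ} {ζ : ℂ}
    (hζ : ζ.im ≠ 0) (hxy : Summable fun k => |y k - x k|) :
    Multipliable fun k => ((y k : ℂ) - ζ) / ((x k : ℂ) - ζ) := by
  refine multipliable_div_of_summable_norm_sub (abs_pos.2 hζ) (fun k hk => hζ ?_)
    (.of_forall fun k => by simpa using Complex.abs_im_le_norm ((x k : ℂ) - ζ)) ?_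
  · simpa using congrArg Complex.im hk
  · simpa [← Complex.ofReal_sub, Complex.norm_real] using hxy

theorem Multipliable.ofReal {ι : Type*} {f : ι → ℝ} (hf : Multipliable f) :
    Multipliable fun k => (f k : ℂ) :=
  hf.map Complex.ofRealHom Complex.continuous_ofReal

theorem Multipliable.ofReal_tprod {ι : Type*} {f : ι → ℝ} (hf : Multipliable f) :
    ((∏' k, f k : ℝ) : ℂ) = ∏' k, (f k : ℂ) :=
  hf.map_tprod Complex.ofRealHom Complex.continuous_ofReal

theorem one_sub_div_mul_inv_one_sub_div {K : Type*} [Field K] {x y z : K} (hx : x ≠ 0)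
    (hy : y ≠ 0) : (1 - z / y) * (1 - z / x)⁻¹ = x / y * ((y - z) / (x - z)) := by
  rw [one_sub_div hy, one_sub_div hx, inv_div]
  ring

theorem div_mul_one_sub_div_mul_inv_one_sub_div {K : Type*} [Field K] {x y z : K} (hx : x ≠ 0)
    (hy : y ≠ 0) : y / x * ((1 - z / y) * (1 - z / x)⁻¹) = (y - z) / (x - z) := by
  rw [one_sub_div_mul_inv_one_sub_div hx hy, ← mul_assoc, div_mul_div_cancel₀ hx, div_self hy,
    one_mul]

theorem two_spectra_product_normalization_general
    (M : Set ℤ)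
    (lam mu : ℤ → ℝ)
    (hacc : ∀ R : ℝ, 0 < R → {k ∈ M | |lam k| ≤ R}.Finite)
    (hsum : Summable (fun k : M => mu (k : ℤ) - lam (k : ℤ)))
    (hlam : ∀ k ∈ M, lam k ≠ 0)
    (hmu : ∀ k ∈ M, mu k ≠ 0) :
    Multipliable (fun k : M => mu (k : ℤ) / lam (k : ℤ)) ∧
    ∀ ζ : ℂ, ζ.im ≠ 0 →
      Multipliable
        (fun k : M => (1 - ζ / (mu (k : ℤ) : ℂ)) * (1 - ζ / (lam (k : ℤ) : ℂ))⁻¹) ∧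
      Multipliable (fun k : M => ((mu (k : ℤ) : ℂ) - ζ) / ((lam (k : ℤ) : ℂ) - ζ)) ∧
      ((∏' k : M, mu (k : ℤ) / lam (k : ℤ) : ℝ) : ℂ) *
          ∏' k : M, (1 - ζ / (mu (k : ℤ) : ℂ)) * (1 - ζ / (lam (k : ℤ) : ℂ))⁻¹ =
        ∏' k : M, ((mu (k : ℤ) : ℂ) - ζ) / ((lam (k : ℤ) : ℂ) - ζ) := by
  have hgap : Summable fun k : M => |mu k - lam k| := hsum.abs
  have hlam_large : ∀ᶠ k : M in cofinite, 2 ≤ |lam k| :=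
    (eventually_cofinite_not_of_finite_sep (hacc 2 two_pos)).mono fun k hk => (not_le.1 hk).le
  have hmu_large := eventually_one_le_abs_of_summable_abs_sub hlam_large hgap
  have hC : Multipliable fun k : M => mu k / lam k :=
    multipliable_div_of_summable_norm_sub one_pos (fun k => hlam k k.2)
      (hlam_large.mono fun k hk => by rw [Real.norm_eq_abs]; linarith) hgap
  have hC_inv : Multipliable fun k : M => lam k / mu k :=
    multipliable_div_of_summable_norm_sub one_pos (fun k => hmu k k.2) hmu_large
      (by simpa only [Real.norm_eq_abs, abs_sub_comm] using hgap)
  have hlamℂ (k : M) : (lam k : ℂ) ≠ 0 := Complex.ofReal_ne_zero.2 (hlam k k.2)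
  have hmuℂ (k : M) : (mu k : ℂ) ≠ 0 := Complex.ofReal_ne_zero.2 (hmu k k.2)
  refine ⟨hC, fun ζ hζ => ?_⟩
  have hratio := multipliable_ofReal_sub_div_ofReal_sub (x := fun k : M => lam k) hζ hgap
  have hnormalized : Multipliable
      fun k : M => (1 - ζ / (mu k : ℂ)) * (1 - ζ / (lam k : ℂ))⁻¹ := by
    simpa only [one_sub_div_mul_inv_one_sub_div (hlamℂ _) (hmuℂ _), Complex.ofReal_div] using
      hC_inv.ofReal.mul hratio
  refine ⟨hnormalized, hratio, ?_⟩
  rw [hC.ofReal_tprod, ← hC.ofReal.tprod_mul hnormalized]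
  exact tprod_congr fun k => by
    simpa using div_mul_one_sub_div_mul_inv_one_sub_div (z := ζ) (hlamℂ k) (hmuℂ k)

/-- For interlaced sequences with summable gaps whose members are all
nonzero and of equal sign within each pair, the product C = ∏_{k∈M} μ_k/λ_k converges,
and for every nonreal ζ the products ∏ (1 − ζ/μ_k)(1 − ζ/λ_k)⁻¹ and
∏ (μ_k − ζ)/(λ_k − ζ) converge with C · ∏ (1 − ζ/μ_k)(1 − ζ/λ_k)⁻¹ =
∏ (μ_k − ζ)/(λ_k − ζ). -/
theorem two_spectra_product_normalization
    (M : Set ℤ) (hM : M.Nonempty)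
    (hMint : ∀ a b c : ℤ, a ∈ M → c ∈ M → a ≤ b → b ≤ c → b ∈ M)
    (lam mu : ℤ → ℝ)
    (hinter₁ : ∀ k ∈ M, lam k < mu k)
    (hinter₂ : ∀ k : ℤ, k ∈ M → k + 1 ∈ M → mu k < lam (k + 1))
    (hacc : ∀ R : ℝ, 0 < R → {k ∈ M | |lam k| ≤ R}.Finite)
    (hsum : Summable (fun k : M => mu (k : ℤ) - lam (k : ℤ)))
    (hlam : ∀ k ∈ M, lam k ≠ 0)
    (hmu : ∀ k ∈ M, mu k ≠ 0)
    (hsign : ∀ k ∈ M, 0 < lam k * mu k) :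
    Multipliable (fun k : M => mu (k : ℤ) / lam (k : ℤ)) ∧
    ∀ ζ : ℂ, ζ.im ≠ 0 →
      Multipliable
        (fun k : M => (1 - ζ / (mu (k : ℤ) : ℂ)) * (1 - ζ / (lam (k : ℤ) : ℂ))⁻¹) ∧
      Multipliable (fun k : M => ((mu (k : ℤ) : ℂ) - ζ) / ((lam (k : ℤ) : ℂ) - ζ)) ∧
      ((∏' k : M, mu (k : ℤ) / lam (k : ℤ) : ℝ) : ℂ) *
          ∏' k : M, (1 - ζ / (mu (k : ℤ) : ℂ)) * (1 - ζ / (lam (k : ℤ) : ℂ))⁻¹ =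
        ∏' k : M, ((mu (k : ℤ) : ℂ) - ζ) / ((lam (k : ℤ) : ℂ) - ζ) :=
  two_spectra_product_normalization_general M lam mu hacc hsum hlam hmu
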